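/- Let K be a field, let P ∈ K[x]^{m×n} have no zero row, let s ∈ ℤ^n, let t = rdeg_s(P), and let (π_i, δ_i)_{1≤i≤m} be the s-pivot profile of P. Assume P is in s-weak Popov form. Then for every Q ∈ K[x]^{k×m} with no zero row, if (j_i, d_i)_{1≤i≤k} is the t-pivot profile of Q, the s-pivot profile of Q·P is (π_{j_i}, δ_{j_i} + d_i)_{1≤i≤k}. -/

import Mathlib

/-! Row `i` of `Q * P` is `∑ l, Q i l • P l`. Each term has `s`-degree at most `sdeg t (Q i)`,
strictly less when the column lies beyond the `s`-pivot of `P l` or when `l` lies beyond the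
`t`-pivot `j i` of `Q i`. Because `π` is increasing, in column `π (j i)` only the term `l = j i`
reaches that degree, and in later columns no term does; so `π (j i)` is the pivot, with
pivot entry of degree `d i + δ (j i)`. -/

open Polynomial Matrix

noncomputable section

variable {K : Type*} [Field K]

/-- Degree of a univariate polynomial, viewed in `ℤ ∪ {⊥}`. -/
def pdegZ (p : K[X]) : WithBot ℤ := p.degree.map (Nat.cast : ℕ → ℤ)

/-- Shifted degree (`s`-degree) of a row vector. -/
def sdeg {n : ℕ} (s : Fin n → ℤ) (p : Fin n → K[X]) : WithBot ℤ :=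
  Finset.univ.sup fun j => pdegZ (p j) + (s j : WithBot ℤ)

/-- `s`-leading matrix of `P`. -/
def leadMat {m n : ℕ} (s : Fin n → ℤ) (P : Matrix (Fin m) (Fin n) K[X]) :
    Matrix (Fin m) (Fin n) K :=
  Matrix.of fun i j =>
    if pdegZ (P i j) + (s j : WithBot ℤ) = sdeg s (P i) then (P i j).leadingCoeff else 0

/-- `P` is `s`-reduced: its `s`-leading matrix has full row rank. -/
def IsShiftReduced {m n : ℕ} (s : Fin n → ℤ) (P : Matrix (Fin m) (Fin n) K[X]) : Prop :=
  (leadMat s P).rank = m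

/-- `j` is the `s`-pivot index of the row `p`: the largest index where the `s`-degree is attained. -/
def IsPivotIndex {n : ℕ} (s : Fin n → ℤ) (p : Fin n → K[X]) (j : Fin n) : Prop :=
  pdegZ (p j) + (s j : WithBot ℤ) = sdeg s p ∧
  ∀ j', j < j' → pdegZ (p j') + (s j' : WithBot ℤ) ≠ sdeg s p

/-- `P` is in `s`-weak Popov form: no zero row and strictly increasing `s`-pivot indices. -/
def IsWeakPopov {m n : ℕ} (s : Fin n → ℤ) (P : Matrix (Fin m) (Fin n) K[X]) : Prop :=
  (∀ i, P i ≠ 0) ∧ ∃ piv : Fin m → Fin n, StrictMono piv ∧ ∀ i, IsPivotIndex s (P i) (piv i)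

/-- The rows of `Kb` form a basis of the left kernel of `F`. -/
def IsKernelBasis {ℓ m : ℕ} {β : Type*} [Fintype β]
    (Kb : Matrix (Fin ℓ) (Fin m) K[X]) (F : Matrix (Fin m) β K[X]) : Prop :=
  (∀ i, Kb i ᵥ* F = 0) ∧
  LinearIndependent K[X] (fun i : Fin ℓ => Kb i) ∧
  ∀ p : Fin m → K[X], p ᵥ* F = 0 → ∃ u : Fin ℓ → K[X], p = u ᵥ* Kb

/-- Membership in the relation module `Rel_M(F)`. -/
def InRelModule {m n : ℕ} (M : Matrix (Fin n) (Fin n) K[X])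
    (F : Matrix (Fin m) (Fin n) K[X]) (p : Fin m → K[X]) : Prop :=
  ∃ q : Fin n → K[X], p ᵥ* F = q ᵥ* M

/-- The rows of `A` form a basis of the relation module `Rel_M(F)`. -/
def IsRelationBasis {ℓ m n : ℕ} (M : Matrix (Fin n) (Fin n) K[X])
    (A : Matrix (Fin ℓ) (Fin m) K[X]) (F : Matrix (Fin m) (Fin n) K[X]) : Prop :=
  (∀ i, InRelModule M F (A i)) ∧
  LinearIndependent K[X] (fun i : Fin ℓ => A i) ∧
  ∀ p : Fin m → K[X], InRelModule M F p → ∃ u : Fin ℓ → K[X], p = u ᵥ* A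

/-- Rank of a polynomial matrix: its rank over the fraction field `K(x)`. -/
def polyRank {α β : Type*} [Fintype β] (F : Matrix α β K[X]) : ℕ :=
  (F.map (algebraMap K[X] (RatFunc K))).rank

/-- Lexicographic comparison of tuples. -/
def lexLE {r n : ℕ} (a b : Fin r → Fin n) : Prop :=
  ∀ i, (∀ k, k < i → a k = b k) → a i ≤ b i

/-- `j` lists the column rank profile of `F`: the lexicographically smallest strictly
increasing tuple of `rank F` column indices selecting columns of full rank. -/
def IsColRankProfile {α : Type*} {n r : ℕ} (F : Matrix α (Fin n) K[X])
    (j : Fin r → Fin n) : Prop :=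
  StrictMono j ∧ polyRank F = r ∧ polyRank (F.submatrix id j) = r ∧
  ∀ j' : Fin r → Fin n, StrictMono j' → polyRank (F.submatrix id j') = r → lexLE j j'

lemma pdegZ_eq_bot {p : K[X]} : pdegZ p = ⊥ ↔ p = 0 := by
  simp [pdegZ, WithBot.map_eq_bot_iff, degree_eq_bot]

lemma pdegZ_mul (p q : K[X]) : pdegZ (p * q) = pdegZ p + pdegZ q := by
  rw [pdegZ, degree_mul]
  exact WithBot.map_add (Nat.castRingHom ℤ).toAddMonoidHom p.degree q.degree

lemma pdegZ_le_pdegZ_iff {p q : K[X]} : pdegZ p ≤ pdegZ q ↔ p.degree ≤ q.degree :=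
  WithBot.map_le_iff _ Nat.cast_le

lemma pdegZ_lt_pdegZ_iff {p q : K[X]} : pdegZ p < pdegZ q ↔ p.degree < q.degree :=
  lt_iff_lt_of_le_iff_le pdegZ_le_pdegZ_iff

lemma exists_pdegZ_sum_le {ι : Type*} [Fintype ι] [Nonempty ι] (f : ι → K[X]) :
    ∃ l, pdegZ (∑ x, f x) ≤ pdegZ (f l) := by
  obtain ⟨l, -, hl⟩ := Finset.exists_mem_eq_sup Finset.univ Finset.univ_nonempty
    (fun l => (f l).degree)
  exact ⟨l, pdegZ_le_pdegZ_iff.2 ((degree_sum_le _ _).trans hl.le)⟩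

lemma degree_sum_eq_of_dominant {ι : Type*} [Fintype ι] [DecidableEq ι] (f : ι → K[X]) (l₀ : ι)
    (h0 : f l₀ ≠ 0) (h : ∀ l, l ≠ l₀ → (f l).degree < (f l₀).degree) :
    (∑ l, f l).degree = (f l₀).degree := by
  rw [← Finset.sum_erase_add _ _ (Finset.mem_univ l₀), degree_add_eq_right_of_degree_lt]
  refine (degree_sum_le _ _).trans_lt ((Finset.sup_lt_iff ?_).2 ?_)
  · exact bot_lt_iff_ne_bot.2 (degree_eq_bot.not.2 h0)
  · exact fun l hl => h l (Finset.ne_of_mem_erase hl)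

section ShiftedDegree

variable {n : ℕ} {s : Fin n → ℤ} {p : Fin n → K[X]} {c : Fin n}

lemma pdegZ_add_le_sdeg (s : Fin n → ℤ) (p : Fin n → K[X]) (c : Fin n) :
    pdegZ (p c) + (s c : WithBot ℤ) ≤ sdeg s p :=
  Finset.le_sup (f := fun c => pdegZ (p c) + (s c : WithBot ℤ)) (Finset.mem_univ c)

lemma sdeg_le_iff {D : WithBot ℤ} : sdeg s p ≤ D ↔ ∀ c, pdegZ (p c) + (s c : WithBot ℤ) ≤ D := by
  simp [sdeg]

lemma sdeg_ne_bot (hp : p ≠ 0) : sdeg s p ≠ ⊥ := by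
  obtain ⟨c, hc⟩ := Function.ne_iff.1 hp
  refine ne_bot_of_le_ne_bot ?_ (pdegZ_add_le_sdeg s p c)
  rw [Ne, WithBot.add_eq_bot, not_or, pdegZ_eq_bot]
  exact ⟨hc, WithBot.coe_ne_bot⟩

lemma IsPivotIndex.lt_sdeg {j : Fin n} (h : IsPivotIndex s p j) (hc : j < c) :
    pdegZ (p c) + (s c : WithBot ℤ) < sdeg s p :=
  (pdegZ_add_le_sdeg s p c).lt_of_ne (h.2 c hc)

lemma IsPivotIndex.apply_ne_zero {j : Fin n} (h : IsPivotIndex s p j) (hp : sdeg s p ≠ ⊥) :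
    p j ≠ 0 := by
  rintro h0
  apply hp
  rw [← h.1, h0, pdegZ_eq_bot.2 rfl, WithBot.bot_add]

end ShiftedDegree

section PredictablePivot

variable {m n : ℕ} {s : Fin n → ℤ} {t : Fin m → ℤ} {P : Matrix (Fin m) (Fin n) K[X]}
  {π : Fin m → Fin n} {q : Fin m → K[X]} {j : Fin m}

lemma pdegZ_mul_add_le (ht : ∀ l, (t l : WithBot ℤ) = sdeg s (P l)) (a : K[X]) (l : Fin m)
    (c : Fin n) : pdegZ (a * P l c) + (s c : WithBot ℤ) ≤ pdegZ a + (t l : WithBot ℤ) := by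
  rw [pdegZ_mul, add_assoc, ht l]
  gcongr
  exact pdegZ_add_le_sdeg s (P l) c

lemma pdegZ_mul_add_lt_sdeg (hq : q ≠ 0) (ht : ∀ l, (t l : WithBot ℤ) = sdeg s (P l))
    (hπ : ∀ l, IsPivotIndex s (P l) (π l)) (hj : IsPivotIndex t q j) {l : Fin m} {c : Fin n}
    (hlc : π l < c ∨ j < l) : pdegZ (q l * P l c) + (s c : WithBot ℤ) < sdeg t q := by
  rcases hlc with hc | hl
  · by_cases hql : q l = 0
    · rw [hql, zero_mul, pdegZ_eq_bot.2 rfl, WithBot.bot_add]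
      exact bot_lt_iff_ne_bot.2 (sdeg_ne_bot hq)
    rw [pdegZ_mul, add_assoc]
    calc pdegZ (q l) + (pdegZ (P l c) + (s c : WithBot ℤ))
        < pdegZ (q l) + (t l : WithBot ℤ) :=
          WithBot.add_lt_add_left (pdegZ_eq_bot.not.2 hql) ((ht l).symm ▸ (hπ l).lt_sdeg hc)
      _ ≤ sdeg t q := pdegZ_add_le_sdeg t q l
  · exact (pdegZ_mul_add_le ht (q l) l c).trans_lt (hj.lt_sdeg hl)

lemma sdeg_vecMul_le (hq : q ≠ 0) (ht : ∀ l, (t l : WithBot ℤ) = sdeg s (P l)) :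
    sdeg s (q ᵥ* P) ≤ sdeg t q := by
  have : Nonempty (Fin m) := ⟨(Function.ne_iff.1 hq).choose⟩
  refine sdeg_le_iff.2 fun c => ?_
  obtain ⟨l, hl⟩ := exists_pdegZ_sum_le fun l => q l * P l c
  rw [vecMul_apply_eq_sum]
  calc pdegZ (∑ l, q l * P l c) + (s c : WithBot ℤ)
      ≤ pdegZ (q l * P l c) + (s c : WithBot ℤ) := by gcongr
    _ ≤ pdegZ (q l) + (t l : WithBot ℤ) := pdegZ_mul_add_le ht (q l) l c
    _ ≤ sdeg t q := pdegZ_add_le_sdeg t q l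

lemma pdegZ_vecMul_add_lt_sdeg (hq : q ≠ 0) (ht : ∀ l, (t l : WithBot ℤ) = sdeg s (P l))
    (hπ : ∀ l, IsPivotIndex s (P l) (π l)) (hmono : StrictMono π) (hj : IsPivotIndex t q j)
    {c : Fin n} (hc : π j < c) : pdegZ ((q ᵥ* P) c) + (s c : WithBot ℤ) < sdeg t q := by
  have : Nonempty (Fin m) := ⟨j⟩
  obtain ⟨l, hl⟩ := exists_pdegZ_sum_le fun l => q l * P l c
  rw [vecMul_apply_eq_sum]
  refine lt_of_le_of_lt (by gcongr) (pdegZ_mul_add_lt_sdeg hq ht hπ hj ?_)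
  rcases le_or_gt l j with hlj | hjl
  · exact Or.inl ((hmono.monotone hlj).trans_lt hc)
  · exact Or.inr hjl

lemma pdegZ_mul_pivot_add_eq_sdeg (ht : ∀ l, (t l : WithBot ℤ) = sdeg s (P l))
    (hπ : ∀ l, IsPivotIndex s (P l) (π l)) (hj : IsPivotIndex t q j) :
    pdegZ (q j * P j (π j)) + (s (π j) : WithBot ℤ) = sdeg t q := by
  rw [pdegZ_mul, add_assoc, (hπ j).1, ← ht j, hj.1]

lemma degree_vecMul_apply_pivot (hq : q ≠ 0) (ht : ∀ l, (t l : WithBot ℤ) = sdeg s (P l))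
    (hπ : ∀ l, IsPivotIndex s (P l) (π l)) (hmono : StrictMono π) (hj : IsPivotIndex t q j) :
    ((q ᵥ* P) (π j)).degree = (q j * P j (π j)).degree := by
  have hmain := pdegZ_mul_pivot_add_eq_sdeg ht hπ hj
  rw [vecMul_apply_eq_sum]
  refine degree_sum_eq_of_dominant _ j ?_ fun l hl => ?_
  · intro h
    rw [h, pdegZ_eq_bot.2 rfl, WithBot.bot_add] at hmain
    exact sdeg_ne_bot hq hmain.symm
  · rw [← pdegZ_lt_pdegZ_iff]
    refine lt_of_add_lt_add_right (a := (s (π j) : WithBot ℤ)) ?_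
    rw [hmain]
    refine pdegZ_mul_add_lt_sdeg hq ht hπ hj ?_
    rcases hl.lt_or_gt with h | h
    exacts [Or.inl (hmono h), Or.inr h]

lemma isPivotIndex_vecMul (hq : q ≠ 0) (ht : ∀ l, (t l : WithBot ℤ) = sdeg s (P l))
    (hπ : ∀ l, IsPivotIndex s (P l) (π l)) (hmono : StrictMono π) (hj : IsPivotIndex t q j) :
    IsPivotIndex s (q ᵥ* P) (π j) := by
  have hpiv : pdegZ ((q ᵥ* P) (π j)) + (s (π j) : WithBot ℤ) = sdeg t q := by
    rw [pdegZ, degree_vecMul_apply_pivot hq ht hπ hmono hj, ← pdegZ,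
      pdegZ_mul_pivot_add_eq_sdeg ht hπ hj]
  have hsdeg : sdeg s (q ᵥ* P) = sdeg t q :=
    (sdeg_vecMul_le hq ht).antisymm (hpiv ▸ pdegZ_add_le_sdeg _ _ _)
  refine ⟨hpiv.trans hsdeg.symm, fun c hc => ?_⟩
  rw [hsdeg]
  exact (pdegZ_vecMul_add_lt_sdeg hq ht hπ hmono hj hc).ne

end PredictablePivot

theorem stmt3_general {K : Type*} [Field K] {m n k : ℕ}
    (P : Matrix (Fin m) (Fin n) K[X])
    (s : Fin n → ℤ) (t : Fin m → ℤ) (ht : ∀ i, (t i : WithBot ℤ) = sdeg s (P i))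
    (π : Fin m → Fin n) (hπ : ∀ i, IsPivotIndex s (P i) (π i)) (hmono : StrictMono π)
    (δ : Fin m → ℕ) (hδ : ∀ i, δ i = (P i (π i)).natDegree)
    (Q : Matrix (Fin k) (Fin m) K[X]) (hQ : ∀ i, Q i ≠ 0)
    (j : Fin k → Fin m) (hj : ∀ i, IsPivotIndex t (Q i) (j i))
    (d : Fin k → ℕ) (hd : ∀ i, d i = (Q i (j i)).natDegree) :
    ∀ i : Fin k, (Q * P) i ≠ 0 ∧ IsPivotIndex s ((Q * P) i) (π (j i)) ∧
      ((Q * P) i (π (j i))).natDegree = δ (j i) + d i := by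
  intro i
  have hdeg := degree_vecMul_apply_pivot (hQ i) ht hπ hmono (hj i)
  have hQj : Q i (j i) ≠ 0 := (hj i).apply_ne_zero (sdeg_ne_bot (hQ i))
  have hPj : P (j i) (π (j i)) ≠ 0 :=
    (hπ (j i)).apply_ne_zero (ht (j i) ▸ WithBot.coe_ne_bot)
  rw [mul_apply_eq_vecMul]
  refine ⟨fun h0 => ?_, isPivotIndex_vecMul (hQ i) ht hπ hmono (hj i), ?_⟩
  · rw [h0, Pi.zero_apply, degree_zero, eq_comm, degree_eq_bot] at hdeg
    exact mul_ne_zero hQj hPj hdeg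
  · rw [natDegree_eq_natDegree hdeg, natDegree_mul hQj hPj, hd, hδ, add_comm]

/-- Predictable pivot property. -/
theorem stmt3 {K : Type*} [Field K] {m n k : ℕ}
    (P : Matrix (Fin m) (Fin n) K[X]) (hP : ∀ i, P i ≠ 0)
    (s : Fin n → ℤ) (t : Fin m → ℤ) (ht : ∀ i, (t i : WithBot ℤ) = sdeg s (P i))
    (π : Fin m → Fin n) (hπ : ∀ i, IsPivotIndex s (P i) (π i)) (hmono : StrictMono π)
    (δ : Fin m → ℕ) (hδ : ∀ i, δ i = (P i (π i)).natDegree)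
    (Q : Matrix (Fin k) (Fin m) K[X]) (hQ : ∀ i, Q i ≠ 0)
    (j : Fin k → Fin m) (hj : ∀ i, IsPivotIndex t (Q i) (j i))
    (d : Fin k → ℕ) (hd : ∀ i, d i = (Q i (j i)).natDegree) :
    ∀ i : Fin k, (Q * P) i ≠ 0 ∧ IsPivotIndex s ((Q * P) i) (π (j i)) ∧
      ((Q * P) i (π (j i))).natDegree = δ (j i) + d i :=
  stmt3_general P s t ht π hπ hmono δ hδ Q hQ j hj d hd

end
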